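/- arXiv:2306.10154 — 2 statements merged into one kernel-verified Lean document; each statement's English description precedes it below -/
import Mathlib

section
/- Let k1, k2 be positive integers with k1 > k2 and gcd(k1,k2)=1, and let g1 = p^A(k1+k2 | k1 / 2k1+k2) and g2 = p^A(k1−k2 | k2 / k1), which are Frobenius type-A seaweeds. Then the block of the spectrum matrix of g1 on rows {k1+k2+1,…,2k1+k2} and columns {k1+k2+1,…,2k1+k2} is equal, as a multiset, to the multiset of values of the extended spectrum matrix of g2. -/
namespace Seaweed

/-- Positions `i` and `j` (1-indexed) are joined by an arc of the composition `c`: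
they lie in the same block of `c` and are placed symmetrically within it. -/
def blockPair (c : List ℕ) (i j : ℕ) : Prop :=
  ∃ k, k < c.length ∧ (c.take k).sum < i ∧ (c.take k).sum < j ∧
    i + j = 2 * (c.take k).sum + c.getD k 0 + 1 ∧ i ≠ j

lemma blockPair_symm {c : List ℕ} {i j : ℕ} (h : blockPair c i j) : blockPair c j i := by
  obtain ⟨k, hk, hi, hj, hsum, hne⟩ := h
  exact ⟨k, hk, hj, hi, by omega, hne.symm⟩

/-- The meander `M(a|b)` of the pair of compositions `(a, b)`, as a simple graph on `ℕ`
(positions `1, …, a.sum` carry the meander; all other naturals are isolated).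
Top edges come from `a`, bottom edges from `b`. -/
def meander (a b : List ℕ) : SimpleGraph ℕ where
  Adj i j := blockPair a i j ∨ blockPair b i j
  symm := ⟨fun _ _ h => h.imp blockPair_symm blockPair_symm⟩
  loopless := by
    constructor
    rintro i (⟨k, _, _, _, _, hne⟩ | ⟨k, _, _, _, _, hne⟩) <;> exact hne rfl

/-- The directed-edge relation of the oriented meander: top edges are oriented
right-to-left, bottom edges left-to-right. -/
def dirEdge (a b : List ℕ) (x y : ℕ) : Prop :=
  (blockPair a x y ∧ y < x) ∨ (blockPair b x y ∧ x < y)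

open scoped Classical in
/-- The weight of a walk in the oriented meander: each step taken in agreement with
the orientation counts `+1`, each step against it counts `-1`. -/
noncomputable def walkWeight (a b : List ℕ) {i j : ℕ} (w : (meander a b).Walk i j) : ℤ :=
  (w.darts.map fun d => if dirEdge a b d.toProd.1 d.toProd.2 then (1 : ℤ) else -1).sum

open scoped Classical in
/-- `w(P_{i,j}(a|b))`: the weight of the (unique, when the meander consists of a single
path) path from `v_i` to `v_j` in the oriented meander. -/
noncomputable def pathWeight (a b : List ℕ) (i j : ℕ) : ℤ :=
  if h : ∃ p : (meander a b).Walk i j, p.IsPath then walkWeight a b h.choose else 0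

/-- The meander of `(a, b)` consists of a single path: it has no cycles (in particular no
doubled top/bottom edge, which would be a 2-cycle) and all positions `1, …, n` are
connected.  This is exactly the condition for `p^A(a|b)` to be Frobenius. -/
def IsSinglePath (a b : List ℕ) : Prop :=
  (meander a b).IsAcyclic ∧
  (∀ i j, i ∈ Finset.Icc 1 a.sum → j ∈ Finset.Icc 1 a.sum → (meander a b).Reachable i j) ∧
  ∀ i j, ¬(blockPair a i j ∧ blockPair b i j)

/-- `i` and `j` lie in the same block of the composition `c`. -/
def sameBlock (c : List ℕ) (i j : ℕ) : Prop :=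
  ∃ k, k < c.length ∧ (c.take k).sum < i ∧ i ≤ (c.take k).sum + c.getD k 0 ∧
    (c.take k).sum < j ∧ j ≤ (c.take k).sum + c.getD k 0

/-- The matrix position `(i, j)` belongs to the seaweed `p^A(a|b)`. -/
def seaweedPos (a b : List ℕ) (i j : ℕ) : Prop :=
  (j ≤ i ∧ sameBlock a i j) ∨ (i ≤ j ∧ sameBlock b i j)

open scoped Classical in
/-- The block of the spectrum matrix of `p^A(a|b)` on rows `R` and columns `C`:
the multiset of weights `w(P_{i,j})` over positions `(i,j)` of the seaweed with
`i ∈ R`, `j ∈ C`. -/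
noncomputable def spectrumBlock (a b : List ℕ) (R C : Finset ℕ) : Multiset ℤ :=
  ((R ×ˢ C).filter fun p => seaweedPos a b p.1 p.2).val.map fun p => pathWeight a b p.1 p.2

/-- The multiset of all values of the extended spectrum matrix of `p^A(a|b)`:
the weights `w(P_{i,j})` over all pairs `1 ≤ i, j ≤ n`. -/
noncomputable def extendedValues (a b : List ℕ) : Multiset ℤ :=
  (Finset.Icc 1 a.sum ×ˢ Finset.Icc 1 a.sum).val.map fun p => pathWeight a b p.1 p.2

/-- The spectrum of a Frobenius type-A seaweed `p^A(a|b)`: the multiset of entries of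
its spectrum matrix, with one copy of `0` removed. -/
noncomputable def spectrum (a b : List ℕ) : Multiset ℤ :=
  spectrumBlock a b (Finset.Icc 1 a.sum) (Finset.Icc 1 a.sum) - {0}

/-- The extended spectrum: all entries of the extended spectrum matrix, with one copy
of `0` removed. -/
noncomputable def extendedSpectrum (a b : List ℕ) : Multiset ℤ :=
  extendedValues a b - {0}

/-- Listing the distinct values of the multiset `S` in increasing order, the
corresponding sequence of multiplicities is log-concave. -/
def HasLogConcaveSpectrum (S : Multiset ℤ) : Prop :=
  ∀ i : ℕ, 0 < i → i + 1 < (S.toFinset.sort (· ≤ ·)).length →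
    S.count ((S.toFinset.sort (· ≤ ·)).getD (i - 1) 0) *
      S.count ((S.toFinset.sort (· ≤ ·)).getD (i + 1) 0) ≤
      S.count ((S.toFinset.sort (· ≤ ·)).getD i 0) ^ 2

/-!
A *potential* on an oriented meander is an integer function on its vertices that rises by one
along every oriented edge; the weight of any walk from `i` to `j` is then `f j - f i`.

Potentials and connectivity of `M(x, y | x + y)` for coprime `x, y` are both propagated along
the winding-down moves `M(x, y | x + y) ⇝ M(2y - x, x - y | y)` (for `y ≤ x ≤ 2y`),
`M(x, y | x + y) ⇝ M(x - 2y, y | x - y)` (for `2y ≤ x`) and the left-right reflection, which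
reduce every coprime pair to the one-vertex meander `M(1, 0 | 1)`. Under the first move the
reduced meander lives on the last top block `x + 1, …, x + y` via `p ↦ p + x`: each of its arcs
is realised by a path of at most five arcs of the big meander, and the lifted potential there is
`-f`. Hence `w(P_{q+x, p+x}(x, y | x + y)) = w(P_{p,q}(2y - x, x - y | y))`, and for
`x = k1 + k2`, `y = k1` the bottom-right block of the first spectrum matrix is the transpose of
the extended spectrum matrix of the second seaweed.
-/

lemma blockPair_ne {c : List ℕ} {i j : ℕ} (h : blockPair c i j) : i ≠ j :=
  h.choose_spec.2.2.2.2

lemma blockPair_pair {x y i j : ℕ} : blockPair [x, y] i j ↔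
    ((0 < i ∧ 0 < j ∧ i + j = x + 1) ∨ (x < i ∧ x < j ∧ i + j = 2 * x + y + 1)) ∧ i ≠ j := by
  constructor
  · rintro ⟨k, hk, hblock⟩
    simp only [List.length_cons, List.length_nil] at hk
    interval_cases k <;> simp_all
  · rintro ⟨⟨hi, hj, hs⟩ | ⟨hi, hj, hs⟩, hne⟩
    · exact ⟨0, by simp, by simpa, by simpa, by simpa, hne⟩
    · exact ⟨1, by simp, by simpa, by simpa, by simp; omega, hne⟩

lemma blockPair_singleton {z i j : ℕ} : blockPair [z] i j ↔
    (0 < i ∧ 0 < j ∧ i + j = z + 1) ∧ i ≠ j := by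
  constructor
  · rintro ⟨k, hk, hblock⟩
    obtain rfl : k = 0 := by simpa using hk
    simp_all
  · rintro ⟨⟨hi, hj, hs⟩, hne⟩
    exact ⟨0, by simp, by simpa, by simpa, by simpa, hne⟩

section PairMeander

variable {x y z u v i j : ℕ}

lemma meander_pair_adj : (meander [x, y] [z]).Adj u v ↔
    ((0 < u ∧ 0 < v ∧ u + v = x + 1) ∨ (x < u ∧ x < v ∧ u + v = 2 * x + y + 1) ∨
      (0 < u ∧ 0 < v ∧ u + v = z + 1)) ∧ u ≠ v := by
  simp only [meander, blockPair_pair, blockPair_singleton]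
  tauto

lemma meander_pair_reachable_of_arc
    (h : (0 < u ∧ 0 < v ∧ u + v = x + 1) ∨ (x < u ∧ x < v ∧ u + v = 2 * x + y + 1) ∨
      (0 < u ∧ 0 < v ∧ u + v = z + 1)) :
    (meander [x, y] [z]).Reachable u v := by
  rcases eq_or_ne u v with rfl | hne
  · rfl
  · exact (meander_pair_adj.mpr ⟨h, hne⟩).reachable

lemma seaweedPos_pair_of_mem_last_block (hi : i ∈ Finset.Icc (x + 1) (x + y))
    (hj : j ∈ Finset.Icc (x + 1) (x + y)) : seaweedPos [x, y] [x + y] i j := by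
  rw [Finset.mem_Icc] at hi hj
  rcases le_total j i with hji | hij
  · exact Or.inl ⟨hji, 1, by simp, by simpa using hi.1, by simpa using hi.2,
      by simpa using hj.1, by simpa using hj.2⟩
  · exact Or.inr ⟨hij, 0, by simp, by simp; omega, by simpa using hi.2, by simp; omega,
      by simpa using hj.2⟩

end PairMeander

structure IsPotential (a b : List ℕ) (f : ℕ → ℤ) : Prop where
  top : ∀ u v, blockPair a u v → u < v → f u = f v + 1
  bot : ∀ u v, blockPair b u v → u < v → f v = f u + 1

namespace IsPotential

variable {a b : List ℕ} {f : ℕ → ℤ}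

open scoped Classical in
lemma dart_weight (hf : IsPotential a b f) {u v : ℕ} (h : (meander a b).Adj u v) :
    (if dirEdge a b u v then (1 : ℤ) else -1) = f v - f u := by
  by_cases hd : dirEdge a b u v
  · rw [if_pos hd]
    rcases hd with ⟨h, hvu⟩ | ⟨h, huv⟩
    · linarith [hf.top v u (blockPair_symm h) hvu]
    · linarith [hf.bot u v h huv]
  · rw [if_neg hd]
    rcases h with h | h <;> rcases (blockPair_ne h).lt_or_gt with huv | hvu
    · linarith [hf.top u v h huv]
    · exact absurd (Or.inl ⟨h, hvu⟩) hd
    · exact absurd (Or.inr ⟨h, huv⟩) hd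
    · linarith [hf.bot v u (blockPair_symm h) hvu]

lemma walkWeight_eq (hf : IsPotential a b f) {i j : ℕ} (p : (meander a b).Walk i j) :
    walkWeight a b p = f j - f i := by
  induction p with
  | nil => simp [walkWeight]
  | cons h p ih =>
    rw [walkWeight, SimpleGraph.Walk.darts_cons, List.map_cons, List.sum_cons, ← walkWeight, ih,
      hf.dart_weight h]
    ring

lemma pathWeight_eq (hf : IsPotential a b f) {i j : ℕ} (hij : (meander a b).Reachable i j) :
    pathWeight a b i j = f j - f i := by
  have hpath : ∃ p : (meander a b).Walk i j, p.IsPath :=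
    let ⟨p⟩ := hij; ⟨p.bypass, p.bypass_isPath⟩
  rw [pathWeight, dif_pos hpath, hf.walkWeight_eq]

end IsPotential

def PreconnectedOn {V : Type*} (G : SimpleGraph V) (s : Set V) : Prop :=
  ∀ u ∈ s, ∀ v ∈ s, G.Reachable u v

lemma PreconnectedOn.of_reachable_image {V W : Type*} {G : SimpleGraph V} {H : SimpleGraph W}
    {s : Set V} {t : Set W} (hG : PreconnectedOn G s) (φ : V → W)
    (hφ : ∀ u v, G.Adj u v → H.Reachable (φ u) (φ v))
    (ht : ∀ w ∈ t, ∃ v ∈ s, H.Reachable w (φ v)) : PreconnectedOn H t := by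
  intro w₁ hw₁ w₂ hw₂
  obtain ⟨v₁, hv₁, h₁⟩ := ht w₁ hw₁
  obtain ⟨v₂, hv₂, h₂⟩ := ht w₂ hw₂
  have himage : H.Reachable (φ v₁) (φ v₂) := by
    have hv := hG v₁ hv₁ v₂ hv₂
    simp only [SimpleGraph.reachable_iff_reflTransGen] at hφ hv ⊢
    exact Relation.ReflTransGen.lift' φ hφ _ _ hv
  exact h₁.trans (himage.trans h₂.symm)

section Moves

variable {x y v : ℕ} {f : ℕ → ℤ}

lemma IsPotential.reflect (hf : IsPotential [y, x] [y + x] f) :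
    IsPotential [x, y] [x + y] (fun v ↦ -f (x + y + 1 - v)) := by
  constructor
  · intro u v huv hlt
    rw [blockPair_pair] at huv
    have := hf.top (x + y + 1 - v) (x + y + 1 - u) (blockPair_pair.mpr ⟨by omega, by omega⟩)
      (by omega)
    linarith
  · intro u v huv hlt
    rw [blockPair_singleton] at huv
    have := hf.bot (x + y + 1 - v) (x + y + 1 - u) (blockPair_singleton.mpr ⟨by omega, by omega⟩)
      (by omega)
    linarith

lemma preconnectedOn_reflect
    (h : PreconnectedOn (meander [y, x] [y + x]) (Set.Icc 1 (y + x))) :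
    PreconnectedOn (meander [x, y] [x + y]) (Set.Icc 1 (x + y)) := by
  refine h.of_reachable_image (fun v ↦ x + y + 1 - v) (fun u v huv ↦ ?_) (fun w hw ↦ ?_)
  · obtain ⟨huv, -⟩ := meander_pair_adj.mp huv
    exact meander_pair_reachable_of_arc (by omega)
  · rw [Set.mem_Icc] at hw
    exact ⟨x + y + 1 - w, by rw [Set.mem_Icc]; omega, by rw [Nat.sub_sub_self (by omega)]⟩

/- Under a winding-down move, every vertex of `M(x, y | x + y)` is joined by one or two arcs to
the copy of a vertex `p` of the reduced meander; a potential `f` of the reduced meander is lifted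
along these arcs. -/

def liftPotentialA (x y : ℕ) (f : ℕ → ℤ) (v : ℕ) : ℤ :=
  if v ≤ y then -f (y + 1 - v) - 1 else if v ≤ x then -f (v - (x - y)) - 2 else -f (v - x)

lemma liftPotentialA_of_le (h : v ≤ y) : liftPotentialA x y f v = -f (y + 1 - v) - 1 :=
  if_pos h

lemma liftPotentialA_of_lt_of_le (h₁ : y < v) (h₂ : v ≤ x) :
    liftPotentialA x y f v = -f (v - (x - y)) - 2 := by
  rw [liftPotentialA, if_neg h₁.not_ge, if_pos h₂]

lemma liftPotentialA_of_lt (hyx : y ≤ x) (h : x < v) : liftPotentialA x y f v = -f (v - x) := by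
  rw [liftPotentialA, if_neg (by omega), if_neg h.not_ge]

lemma IsPotential.liftA (hyx : y ≤ x) (hx : x ≤ 2 * y) (hf : IsPotential [2 * y - x, x - y] [y] f) :
    IsPotential [x, y] [x + y] (liftPotentialA x y f) := by
  constructor
  · intro u v huv hlt
    rw [blockPair_pair] at huv
    rcases huv with ⟨⟨hu, hv, hs⟩ | ⟨hu, hv, hs⟩, -⟩
    · rw [liftPotentialA_of_le (by omega)]
      by_cases hvy : v ≤ y
      · rw [liftPotentialA_of_le hvy]
        have := hf.top (y + 1 - v) (y + 1 - u) (blockPair_pair.mpr ⟨by omega, by omega⟩) (by omega)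
        linarith
      · rw [liftPotentialA_of_lt_of_le (by omega) (by omega), show v - (x - y) = y + 1 - u by omega]
        ring
    · rw [liftPotentialA_of_lt hyx hu, liftPotentialA_of_lt hyx hv]
      have := hf.bot (u - x) (v - x) (blockPair_singleton.mpr ⟨by omega, by omega⟩) (by omega)
      linarith
  · intro u v huv hlt
    rw [blockPair_singleton] at huv
    by_cases huy : u ≤ y
    · rw [liftPotentialA_of_le huy, liftPotentialA_of_lt hyx (by omega),
        show v - x = y + 1 - u by omega]
      ring
    · rw [liftPotentialA_of_lt_of_le (by omega) (by omega),
        liftPotentialA_of_lt_of_le (by omega) (by omega)]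
      have := hf.top (u - (x - y)) (v - (x - y)) (blockPair_pair.mpr ⟨by omega, by omega⟩)
        (by omega)
      linarith

def liftPotentialB (x y : ℕ) (f : ℕ → ℤ) (v : ℕ) : ℤ :=
  if v ≤ y then f (x - y + 1 - v) + 1 else if v ≤ x then f (v - y) else f (v - 2 * y) + 2

lemma liftPotentialB_of_le (h : v ≤ y) : liftPotentialB x y f v = f (x - y + 1 - v) + 1 :=
  if_pos h

lemma liftPotentialB_of_lt_of_le (h₁ : y < v) (h₂ : v ≤ x) :
    liftPotentialB x y f v = f (v - y) := by
  rw [liftPotentialB, if_neg h₁.not_ge, if_pos h₂]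

lemma liftPotentialB_of_lt (hyx : y ≤ x) (h : x < v) :
    liftPotentialB x y f v = f (v - 2 * y) + 2 := by
  rw [liftPotentialB, if_neg (by omega), if_neg h.not_ge]

lemma IsPotential.liftB (hx : 2 * y ≤ x) (hf : IsPotential [x - 2 * y, y] [x - y] f) :
    IsPotential [x, y] [x + y] (liftPotentialB x y f) := by
  constructor
  · intro u v huv hlt
    rw [blockPair_pair] at huv
    rcases huv with ⟨⟨hu, hv, hs⟩ | ⟨hu, hv, hs⟩, -⟩
    · by_cases huy : u ≤ y
      · rw [liftPotentialB_of_le huy, liftPotentialB_of_lt_of_le (by omega) (by omega),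
          show v - y = x - y + 1 - u by omega]
      · rw [liftPotentialB_of_lt_of_le (by omega) (by omega),
          liftPotentialB_of_lt_of_le (by omega) (by omega)]
        exact hf.top (u - y) (v - y) (blockPair_pair.mpr ⟨by omega, by omega⟩) (by omega)
    · rw [liftPotentialB_of_lt (by omega) hu, liftPotentialB_of_lt (by omega) hv]
      have := hf.top (u - 2 * y) (v - 2 * y) (blockPair_pair.mpr ⟨by omega, by omega⟩) (by omega)
      linarith
  · intro u v huv hlt
    rw [blockPair_singleton] at huv
    by_cases huy : u ≤ y
    · rw [liftPotentialB_of_le huy, liftPotentialB_of_lt (by omega) (by omega),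
        show v - 2 * y = x - y + 1 - u by omega]
      ring
    · rw [liftPotentialB_of_lt_of_le (by omega) (by omega),
        liftPotentialB_of_lt_of_le (by omega) (by omega)]
      have := hf.bot (u - y) (v - y) (blockPair_singleton.mpr ⟨by omega, by omega⟩) (by omega)
      linarith

lemma preconnectedOn_of_moveA (hyx : y ≤ x) (hx : x ≤ 2 * y)
    (h : PreconnectedOn (meander [2 * y - x, x - y] [y]) (Set.Icc 1 y)) :
    PreconnectedOn (meander [x, y] [x + y]) (Set.Icc 1 (x + y)) := by
  refine h.of_reachable_image (· + x) (fun p q hpq ↦ ?_) (fun v hv ↦ ?_)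
  · obtain ⟨hp | hp | hp, -⟩ := meander_pair_adj.mp hpq
    · exact (meander_pair_reachable_of_arc (v := y + 1 - p) (by omega)).trans <|
        (meander_pair_reachable_of_arc (v := x - y + p) (by omega)).trans <|
        meander_pair_reachable_of_arc (by omega)
    · exact (meander_pair_reachable_of_arc (v := y + 1 - p) (by omega)).trans <|
        (meander_pair_reachable_of_arc (v := x - y + p) (by omega)).trans <|
        (meander_pair_reachable_of_arc (v := 2 * y + 1 - p) (by omega)).trans <|
        (meander_pair_reachable_of_arc (v := p + x - 2 * y) (by omega)).trans <|
        meander_pair_reachable_of_arc (by omega)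
    · exact meander_pair_reachable_of_arc (by omega)
  · rw [Set.mem_Icc] at hv
    rcases le_or_gt v y with hvy | hvy
    · exact ⟨y + 1 - v, by rw [Set.mem_Icc]; omega, meander_pair_reachable_of_arc (by omega)⟩
    rcases le_or_gt v x with hvx | hvx
    · exact ⟨v + y - x, by rw [Set.mem_Icc]; omega,
        (meander_pair_reachable_of_arc (v := x + 1 - v) (by omega)).trans <|
          meander_pair_reachable_of_arc (by omega)⟩
    · exact ⟨v - x, by rw [Set.mem_Icc]; omega, by rw [Nat.sub_add_cancel hvx.le]⟩

lemma preconnectedOn_of_moveB (hx : 2 * y ≤ x)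
    (h : PreconnectedOn (meander [x - 2 * y, y] [x - y]) (Set.Icc 1 (x - y))) :
    PreconnectedOn (meander [x, y] [x + y]) (Set.Icc 1 (x + y)) := by
  refine h.of_reachable_image (· + y) (fun p q hpq ↦ ?_) (fun v hv ↦ ?_)
  · obtain ⟨hp | hp | hp, -⟩ := meander_pair_adj.mp hpq
    · exact meander_pair_reachable_of_arc (by omega)
    · exact (meander_pair_reachable_of_arc (v := x - y + 1 - p) (by omega)).trans <|
        (meander_pair_reachable_of_arc (v := 2 * y + p) (by omega)).trans <|
        (meander_pair_reachable_of_arc (v := 2 * x - y + 1 - p) (by omega)).trans <|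
        (meander_pair_reachable_of_arc (v := p + 2 * y - x) (by omega)).trans <|
        meander_pair_reachable_of_arc (by omega)
    · exact meander_pair_reachable_of_arc (by omega)
  · rw [Set.mem_Icc] at hv
    rcases le_or_gt v y with hvy | hvy
    · exact ⟨x - y + 1 - v, by rw [Set.mem_Icc]; omega, meander_pair_reachable_of_arc (by omega)⟩
    rcases le_or_gt v x with hvx | hvx
    · exact ⟨v - y, by rw [Set.mem_Icc]; omega, by rw [Nat.sub_add_cancel hvy.le]⟩
    · exact ⟨v - 2 * y, by rw [Set.mem_Icc]; omega,
        (meander_pair_reachable_of_arc (v := x + y + 1 - v) (by omega)).trans <|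
          meander_pair_reachable_of_arc (by omega)⟩

end Moves

section Induction

variable {x y : ℕ}

lemma coprime_moveA (h : Nat.Coprime x y) (hyx : y ≤ x) (hx : x ≤ 2 * y) :
    Nat.Coprime (2 * y - x) (x - y) := by
  rw [show 2 * y - x = y - (x - y) by omega, Nat.coprime_sub_self_left (by omega),
    Nat.coprime_sub_self_right hyx]
  exact h.symm

lemma coprime_moveB (h : Nat.Coprime x y) (hx : 2 * y ≤ x) : Nat.Coprime (x - 2 * y) y := by
  rw [show x - 2 * y = x - y - y by omega, Nat.coprime_sub_self_left (by omega),
    Nat.coprime_sub_self_left (by omega)]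
  exact h

/-- Induction along the winding-down moves, which strictly decrease `x + y` and preserve
coprimality until `(x, y) = (1, 0)`. -/
theorem coprime_induction {P : ℕ → ℕ → Prop} (base : P 1 0) (reflect : ∀ {x y}, P y x → P x y)
    (moveA : ∀ {x y}, y ≤ x → x ≤ 2 * y → P (2 * y - x) (x - y) → P x y)
    (moveB : ∀ {x y}, 2 * y ≤ x → P (x - 2 * y) y → P x y) (h : Nat.Coprime x y) : P x y := by
  induction hs : x + y using Nat.strong_induction_on generalizing x y with
  | _ s ih =>
    wlog hyx : y ≤ x generalizing x y
    · exact reflect (this h.symm (by omega) (by omega))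
    rcases Nat.eq_zero_or_pos y with rfl | hy
    · obtain rfl : x = 1 := Nat.coprime_zero_right x |>.mp h
      exact base
    rcases le_total x (2 * y) with hx | hx
    · exact moveA hyx hx (ih y (by omega) (coprime_moveA h hyx hx) (by omega))
    · exact moveB hx (ih (x - y) (by omega) (coprime_moveB h hx) (by omega))

theorem exists_isPotential (h : Nat.Coprime x y) : ∃ f, IsPotential [x, y] [x + y] f := by
  refine coprime_induction (P := fun x y ↦ ∃ f, IsPotential [x, y] [x + y] f) ?_ ?_ ?_ ?_ h
  · exact ⟨0, fun u v huv _ ↦ by rw [blockPair_pair] at huv; omega,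
      fun u v huv _ ↦ by rw [blockPair_singleton] at huv; omega⟩
  · exact fun ⟨f, hf⟩ ↦ ⟨_, hf.reflect⟩
  · intro x y hyx hx ⟨f, hf⟩
    rw [show 2 * y - x + (x - y) = y by omega] at hf
    exact ⟨_, hf.liftA hyx hx⟩
  · intro x y hx ⟨f, hf⟩
    rw [show x - 2 * y + y = x - y by omega] at hf
    exact ⟨_, hf.liftB hx⟩

theorem preconnectedOn_meander (h : Nat.Coprime x y) :
    PreconnectedOn (meander [x, y] [x + y]) (Set.Icc 1 (x + y)) := by
  refine coprime_induction
    (P := fun x y ↦ PreconnectedOn (meander [x, y] [x + y]) (Set.Icc 1 (x + y)))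
    ?_ preconnectedOn_reflect ?_ ?_ h
  · intro u hu v hv
    obtain rfl : u = v := by simp only [Set.mem_Icc] at hu hv; omega
    rfl
  · intro x y hyx hx hconn
    rw [show 2 * y - x + (x - y) = y by omega] at hconn
    exact preconnectedOn_of_moveA hyx hx hconn
  · intro x y hx hconn
    rw [show x - 2 * y + y = x - y by omega] at hconn
    exact preconnectedOn_of_moveB hx hconn

end Induction

lemma map_Icc_product_shift {β : Type*} (F : ℕ × ℕ → β) (s n : ℕ) :
    (Finset.Icc (s + 1) (s + n) ×ˢ Finset.Icc (s + 1) (s + n)).val.map F =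
      (Finset.Icc 1 n ×ˢ Finset.Icc 1 n).val.map fun p ↦ F (p.2 + s, p.1 + s) := by
  refine Multiset.map_eq_map_of_bij_of_nodup _ _ (Finset.nodup _) (Finset.nodup _)
    (fun p _ ↦ (p.2 - s, p.1 - s)) ?_ ?_ ?_ ?_ <;>
    simp only [Finset.mem_val, Finset.mem_product, Finset.mem_Icc, Prod.exists, Prod.ext_iff]
  · omega
  · omega
  · exact fun q hq ↦ ⟨q.2 + s, q.1 + s, by omega, by omega⟩
  · exact fun p hp ↦ congrArg F (Prod.ext (by omega) (by omega))

theorem spectrumBlock_last_eq_extendedValues_moveA {x y : ℕ} (hyx : y ≤ x) (hx : x ≤ 2 * y)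
    (h : Nat.Coprime x y) :
    spectrumBlock [x, y] [x + y] (Finset.Icc (x + 1) (x + y)) (Finset.Icc (x + 1) (x + y)) =
      extendedValues [2 * y - x, x - y] [y] := by
  have hsum : ([2 * y - x, x - y] : List ℕ).sum = y := by
    simp only [List.sum_cons, List.sum_nil]; omega
  obtain ⟨f, hf⟩ := exists_isPotential (coprime_moveA h hyx hx)
  have hconn := preconnectedOn_meander (coprime_moveA h hyx hx)
  rw [show 2 * y - x + (x - y) = y by omega] at hf hconn
  have hweight : ∀ p ∈ Finset.Icc 1 y ×ˢ Finset.Icc 1 y,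
      pathWeight [x, y] [x + y] (p.2 + x) (p.1 + x) =
        pathWeight [2 * y - x, x - y] [y] p.1 p.2 := by
    simp only [Finset.mem_product, Finset.mem_Icc]
    intro p hp
    have hbig := preconnectedOn_of_moveA hyx hx hconn (p.2 + x) (by rw [Set.mem_Icc]; omega)
      (p.1 + x) (by rw [Set.mem_Icc]; omega)
    rw [(hf.liftA hyx hx).pathWeight_eq hbig, liftPotentialA_of_lt hyx (by omega),
      liftPotentialA_of_lt hyx (by omega), Nat.add_sub_cancel, Nat.add_sub_cancel,
      hf.pathWeight_eq (hconn _ (by rw [Set.mem_Icc]; omega) _ (by rw [Set.mem_Icc]; omega))]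
    ring
  classical
  rw [spectrumBlock, Finset.filter_true_of_mem fun p hp ↦ ?_, map_Icc_product_shift,
    extendedValues, hsum]
  · exact Multiset.map_congr rfl fun p hp ↦ hweight p hp
  · rw [Finset.mem_product] at hp
    exact seaweedPos_pair_of_mem_last_block hp.1 hp.2

theorem statement4_general (k1 k2 : ℕ) (hlt : k2 < k1) (hgcd : Nat.gcd k1 k2 = 1) :
    spectrumBlock [k1 + k2, k1] [2 * k1 + k2]
        (Finset.Icc (k1 + k2 + 1) (2 * k1 + k2)) (Finset.Icc (k1 + k2 + 1) (2 * k1 + k2))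
      = extendedValues [k1 - k2, k2] [k1] := by
  have h := spectrumBlock_last_eq_extendedValues_moveA (x := k1 + k2) (y := k1) (by omega)
    (by omega) (Nat.coprime_self_add_left.mpr (Nat.coprime_comm.mp hgcd))
  rwa [show k1 + k2 + k1 = 2 * k1 + k2 by omega, show 2 * k1 - (k1 + k2) = k1 - k2 by omega,
    Nat.add_sub_cancel_left] at h

/-- For coprime positive `k1 > k2`, the bottom-right block (rows and columns
`k1 + k2 + 1, …, 2 k1 + k2`) of the spectrum matrix of `p^A(k1 + k2 | k1 / 2 k1 + k2)`
consists of the same multiset of values as the extended spectrum matrix of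
`p^A(k1 - k2 | k2 / k1)`. -/
theorem statement4 (k1 k2 : ℕ) (hk1 : 0 < k1) (hk2 : 0 < k2) (hlt : k2 < k1)
    (hgcd : Nat.gcd k1 k2 = 1) :
    spectrumBlock [k1 + k2, k1] [2 * k1 + k2]
        (Finset.Icc (k1 + k2 + 1) (2 * k1 + k2)) (Finset.Icc (k1 + k2 + 1) (2 * k1 + k2))
      = extendedValues [k1 - k2, k2] [k1] :=
  statement4_general k1 k2 hlt hgcd

end Seaweed
end

section
/- For every integer k ≥ 1, let g_k = p^A(2k|1|1 / 2k+2), a Frobenius type-A seaweed. Then the spectrum of g_k is the multiset {−k, k+1} ∪ ⋃_{i=1}^{k} { (−k+i) with multiplicity 4i, (k−i+1) with multiplicity 4i }. Moreover, g_k has the log-concave spectrum property. -/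
/-!
The oriented meander of `(2k|1|1 / 2k+2)` is the gradient of the potential
`φ i = 1 - i` for `i ≤ k` and `φ i = i - (2k+1)` for `i > k`: every oriented edge raises `φ`
by one. The meander is connected, so `w(P_{i,j}) = φ j - φ i`. The seaweed consists of the
first `2k` rows together with the positions `(2k+1, 2k+1)`, `(2k+1, 2k+2)`, `(2k+2, 2k+2)`.
On `1, …, 2k` the potential takes each value of `[1-k, 0]` and of `[-k, -1]` once, on
`1, …, 2k+2` each value of `[1-k, 0]` and of `[-k, 1]` once, so every multiplicity of the
spectrum is a sum of cardinalities of intersections of integer intervals. The resulting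
multiplicities `1, 4, 8, …, 4k, 4k, …, 8, 4, 1` form a tent, which is log-concave.
-/

namespace Seaweed

section

open Finset

lemma blockPair_singleton_iff {n i j : ℕ} :
    blockPair [n] i j ↔ 1 ≤ i ∧ 1 ≤ j ∧ i + j = n + 1 ∧ i ≠ j := by
  constructor
  · rintro ⟨m, hm, hi, hj, hsum, hne⟩
    obtain rfl : m = 0 := by simpa using hm
    simp_all
    omega
  · rintro ⟨hi, hj, hsum, hne⟩
    exact ⟨0, by simp, by simpa, by simpa, by simpa using hsum, hne⟩

lemma blockPair_cons_one_one_iff {n i j : ℕ} : blockPair [n, 1, 1] i j ↔ blockPair [n] i j := by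
  rw [blockPair_singleton_iff]
  constructor
  · rintro ⟨m, hm, h⟩
    simp only [List.length] at hm
    interval_cases m <;> simp_all <;> omega
  · intro h
    exact ⟨0, by simp, by simp; omega⟩

lemma sameBlock_singleton_iff {n i j : ℕ} :
    sameBlock [n] i j ↔ 1 ≤ i ∧ i ≤ n ∧ 1 ≤ j ∧ j ≤ n := by
  constructor
  · rintro ⟨m, hm, h⟩
    obtain rfl : m = 0 := by simpa using hm
    simpa [Nat.lt_iff_add_one_le] using h
  · intro h
    exact ⟨0, by simp, by simp; omega⟩

lemma sameBlock_cons_one_one_iff {n i j : ℕ} :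
    sameBlock [n, 1, 1] i j ↔
      sameBlock [n] i j ∨ (i = n + 1 ∧ j = n + 1) ∨ (i = n + 2 ∧ j = n + 2) := by
  rw [sameBlock_singleton_iff]
  constructor
  · rintro ⟨m, hm, h⟩
    simp only [List.length] at hm
    interval_cases m <;> simp_all <;> omega
  · rintro (h | h | h)
    · exact ⟨0, by simp, by simp; omega⟩
    · exact ⟨1, by simp, by simp; omega⟩
    · exact ⟨2, by simp, by simp; omega⟩

lemma dirEdge_or_dirEdge_of_adj {a b : List ℕ} {x y : ℕ} (h : (meander a b).Adj x y) :
    dirEdge a b x y ∨ dirEdge a b y x := by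
  have hne : x ≠ y := h.ne
  rcases h with h | h
  · rcases Nat.lt_or_gt_of_ne hne with hxy | hxy
    · exact Or.inr (Or.inl ⟨blockPair_symm h, hxy⟩)
    · exact Or.inl (Or.inl ⟨h, hxy⟩)
  · rcases Nat.lt_or_gt_of_ne hne with hxy | hxy
    · exact Or.inl (Or.inr ⟨h, hxy⟩)
    · exact Or.inr (Or.inr ⟨blockPair_symm h, hxy⟩)

section Potential

variable {a b : List ℕ} (φ : ℕ → ℤ)

open scoped Classical in
lemma walkWeight_eq_sub_of_potential (hφ : ∀ x y, dirEdge a b x y → φ y = φ x + 1)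
    {i j : ℕ} (w : (meander a b).Walk i j) : walkWeight a b w = φ j - φ i := by
  induction w with
  | nil => simp [walkWeight]
  | @cons x y _ hxy _ ih =>
    simp only [walkWeight, SimpleGraph.Walk.darts_cons, List.map_cons, List.sum_cons] at ih ⊢
    rw [ih]
    split_ifs with hdir
    · linarith [hφ x y hdir]
    · linarith [hφ y x ((dirEdge_or_dirEdge_of_adj hxy).resolve_left hdir)]

lemma pathWeight_eq_sub_of_potential (hφ : ∀ x y, dirEdge a b x y → φ y = φ x + 1)
    {i j : ℕ} (h : (meander a b).Reachable i j) : pathWeight a b i j = φ j - φ i := by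
  obtain ⟨w⟩ := h
  rw [pathWeight, dif_pos ⟨w.bypass, w.bypass_isPath⟩]
  exact walkWeight_eq_sub_of_potential φ hφ _

end Potential

lemma count_map_sub_product {α β : Type*} (s : Finset α) (t : Finset β) (f : α → ℤ)
    (g : β → ℤ) (v : ℤ) :
    ((s ×ˢ t).val.map fun p => g p.2 - f p.1).count v =
      ∑ i ∈ s, #{j ∈ t | g j = v + f i} := by
  rw [Multiset.count_map, ← filter_val, ← card_def, card_filter, sum_product]
  refine sum_congr rfl fun i _ => ?_
  rw [card_filter]
  exact sum_congr rfl fun j _ => if_congr (by dsimp only; omega) rfl rfl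

lemma sum_Icc_ite_add_mem_Icc (p q lo hi v : ℤ) :
    ∑ u ∈ Icc p q, (if v + u ∈ Icc lo hi then 1 else 0 : ℕ) =
      (min q (hi - v) + 1 - max p (lo - v)).toNat := by
  rw [← card_filter, ← Int.card_Icc]
  congr 1
  ext u
  simp only [mem_filter, mem_Icc]
  omega

lemma sum_ite_natCast_eq {M : Type*} [AddCommMonoid M] (s : Finset ℕ) (c : ℤ) (f : ℕ → M) :
    ∑ i ∈ s, (if (i : ℤ) = c then f i else 0) =
      if 0 ≤ c ∧ c.toNat ∈ s then f c.toNat else 0 := by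
  by_cases hc : 0 ≤ c
  · lift c to ℕ using hc
    simp only [Nat.cast_inj, Int.toNat_natCast, Nat.cast_nonneg, true_and, sum_ite_eq']
  · rw [if_neg (by tauto)]
    exact sum_eq_zero fun i _ => if_neg (by omega)

lemma getD_sort_Icc {a b : ℤ} {i : ℕ} (hi : i < #(Icc a b)) :
    ((Icc a b).sort (· ≤ ·)).getD i 0 = a + i := by
  have hmono : StrictMono fun x : Fin #(Icc a b) => a + (x : ℕ) := fun x y hxy => by
    simpa using hxy
  have hmem : ∀ x : Fin #(Icc a b), a + (x : ℕ) ∈ Icc a b := fun x => by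
    have hx := x.2
    have hcard := Int.card_Icc a b
    simp only [mem_Icc]
    omega
  rw [List.getD_eq_getElem _ _ (by simpa using hi)]
  exact (congrFun (orderEmbOfFin_unique rfl hmem hmono) ⟨i, hi⟩).symm

lemma hasLogConcaveSpectrum_of_toFinset_eq_Icc {S : Multiset ℤ} {a b : ℤ}
    (hS : S.toFinset = Icc a b)
    (h : ∀ v, a < v → v < b → S.count (v - 1) * S.count (v + 1) ≤ S.count v ^ 2) :
    HasLogConcaveSpectrum S := by
  intro i hi hlen
  rw [hS] at hlen ⊢
  rw [length_sort] at hlen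
  rw [getD_sort_Icc (i := i - 1) (by omega), getD_sort_Icc (i := i) (by omega),
    getD_sort_Icc hlen]
  rw [Int.card_Icc] at hlen
  convert h (a + i) (by omega) (by omega) using 3 <;> omega

section Meander

variable (k : ℕ)

lemma meander_adj_iff {x y : ℕ} :
    (meander [2 * k, 1, 1] [2 * k + 2]).Adj x y ↔
      1 ≤ x ∧ 1 ≤ y ∧ (x + y = 2 * k + 1 ∨ x + y = 2 * k + 3) := by
  simp only [meander, blockPair_cons_one_one_iff, blockPair_singleton_iff]
  omega

lemma dirEdge_iff {x y : ℕ} :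
    dirEdge [2 * k, 1, 1] [2 * k + 2] x y ↔
      1 ≤ x ∧ 1 ≤ y ∧ (x + y = 2 * k + 1 ∧ y < x ∨ x + y = 2 * k + 3 ∧ x < y) := by
  simp only [dirEdge, blockPair_cons_one_one_iff, blockPair_singleton_iff]
  omega

lemma reachable_sub_two {i : ℕ} (h3 : 3 ≤ i) (hi : i ≤ 2 * k + 2) :
    (meander [2 * k, 1, 1] [2 * k + 2]).Reachable i (i - 2) := by
  have bottom : (meander [2 * k, 1, 1] [2 * k + 2]).Adj i (2 * k + 3 - i) := by
    rw [meander_adj_iff]; omega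
  have top : (meander [2 * k, 1, 1] [2 * k + 2]).Adj (2 * k + 3 - i) (i - 2) := by
    rw [meander_adj_iff]; omega
  exact bottom.reachable.trans top.reachable

lemma reachable_two_sub_mod_two {i : ℕ} (h1 : 1 ≤ i) (hi : i ≤ 2 * k + 2) :
    (meander [2 * k, 1, 1] [2 * k + 2]).Reachable i (2 - i % 2) := by
  induction i using Nat.strong_induction_on with
  | _ i ih =>
    by_cases h3 : 3 ≤ i
    · have hpar : 2 - (i - 2) % 2 = 2 - i % 2 := by omega
      exact (reachable_sub_two k h3 hi).trans (hpar ▸ ih (i - 2) (by omega) (by omega) (by omega))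
    · obtain rfl | rfl : i = 1 ∨ i = 2 := by omega
      all_goals rfl

lemma reachable_one {i : ℕ} (h1 : 1 ≤ i) (hi : i ≤ 2 * k + 2) :
    (meander [2 * k, 1, 1] [2 * k + 2]).Reachable i 1 := by
  have h21 : (meander [2 * k, 1, 1] [2 * k + 2]).Reachable 2 1 := by
    have bottom : (meander [2 * k, 1, 1] [2 * k + 2]).Adj 2 (2 * k + 1) := by
      rw [meander_adj_iff]; omega
    have hodd := reachable_two_sub_mod_two k (i := 2 * k + 1) (by omega) (by omega)
    rw [show 2 - (2 * k + 1) % 2 = 1 by omega] at hodd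
    exact bottom.reachable.trans hodd
  have hpar := reachable_two_sub_mod_two k h1 hi
  rcases Nat.mod_two_eq_zero_or_one i with h | h <;> rw [h] at hpar
  · exact hpar.trans h21
  · exact hpar

def potential (i : ℕ) : ℤ := if i ≤ k then 1 - i else i - (2 * k + 1)

lemma potential_dirEdge {x y : ℕ} (h : dirEdge [2 * k, 1, 1] [2 * k + 2] x y) :
    potential k y = potential k x + 1 := by
  rw [dirEdge_iff] at h
  simp only [potential]
  split_ifs <;> omega

lemma pathWeight_eq_potential_sub {i j : ℕ} (hi : i ∈ Icc 1 (2 * k + 2))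
    (hj : j ∈ Icc 1 (2 * k + 2)) :
    pathWeight [2 * k, 1, 1] [2 * k + 2] i j = potential k j - potential k i := by
  rw [mem_Icc] at hi hj
  exact pathWeight_eq_sub_of_potential _ (fun _ _ => potential_dirEdge k)
    ((reachable_one k hi.1 hi.2).trans (reachable_one k hj.1 hj.2).symm)

open scoped Classical in
lemma filter_seaweedPos_eq :
    (Icc 1 (2 * k + 2) ×ˢ Icc 1 (2 * k + 2)).filter
        (fun p => seaweedPos [2 * k, 1, 1] [2 * k + 2] p.1 p.2) =
      (Icc 1 (2 * k) ×ˢ Icc 1 (2 * k + 2)).disjUnion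
        {(2 * k + 1, 2 * k + 1), (2 * k + 1, 2 * k + 2), (2 * k + 2, 2 * k + 2)}
        (by simp [disjoint_left]; omega) := by
  ext ⟨i, j⟩
  simp only [seaweedPos, sameBlock_cons_one_one_iff, sameBlock_singleton_iff, mem_filter,
    mem_product, mem_Icc, mem_disjUnion, mem_insert, mem_singleton, Prod.mk.injEq]
  omega

lemma spectrumBlock_eq :
    spectrumBlock [2 * k, 1, 1] [2 * k + 2] (Icc 1 (2 * k + 2)) (Icc 1 (2 * k + 2)) =
      (Icc 1 (2 * k) ×ˢ Icc 1 (2 * k + 2)).val.map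
        (fun p => potential k p.2 - potential k p.1) + {0, 1, 0} := by
  rw [spectrumBlock, filter_seaweedPos_eq, disjUnion_val, Multiset.map_add]
  congr 1
  · refine Multiset.map_congr rfl fun p hp => ?_
    simp only [mem_val, mem_product, mem_Icc] at hp
    exact pathWeight_eq_potential_sub k (by simp; omega) (by simp; omega)
  · have h1 : potential k (2 * k + 1) = 0 := by
      rw [potential, if_neg (by omega)]; push_cast; ring
    have h2 : potential k (2 * k + 2) = 1 := by
      rw [potential, if_neg (by omega)]; push_cast; ring
    rw [insert_val_of_notMem (by simp), insert_val_of_notMem (by simp)]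
    simp only [Multiset.map_cons, singleton_val, Multiset.map_singleton]
    rw [pathWeight_eq_potential_sub k (by simp) (by simp),
      pathWeight_eq_potential_sub k (by simp) (by simp),
      pathWeight_eq_potential_sub k (by simp) (by simp), h1, h2]
    rfl

lemma sum_Icc_potential {M : Type*} [AddCommMonoid M] (H : ℤ → M) {N : ℕ} {m : ℤ}
    (hN : (N : ℤ) = 2 * k + 1 + m) (hm : -1 ≤ m) :
    ∑ i ∈ Icc 1 N, H (potential k i) =
      ∑ u ∈ Icc (1 - k : ℤ) 0, H u + ∑ u ∈ Icc (-k : ℤ) m, H u := by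
  have hsplit : Icc 1 N = Icc 1 k ∪ Icc (k + 1) N := by
    ext i; simp only [mem_union, mem_Icc]; omega
  rw [hsplit, sum_union (disjoint_left.2 fun i hi hi' => by simp only [mem_Icc] at hi hi'; omega)]
  congr 1
  · refine sum_nbij' (fun i => 1 - i) (fun u => (1 - u).toNat) ?_ ?_ ?_ ?_ ?_ <;>
      intro i hi <;> simp only [mem_Icc] at hi ⊢
    all_goals first | omega | rw [potential, if_pos (by omega)]
  · refine sum_nbij' (fun i => i - (2 * k + 1)) (fun u => (u + 2 * k + 1).toNat) ?_ ?_ ?_ ?_ ?_ <;>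
      intro i hi <;> simp only [mem_Icc] at hi ⊢
    all_goals first | omega | rw [potential, if_neg (by omega)]

lemma card_filter_potential_eq (c : ℤ) :
    #{j ∈ Icc 1 (2 * k + 2) | potential k j = c} =
      (if c ∈ Icc (1 - k : ℤ) 0 then 1 else 0) + (if c ∈ Icc (-k : ℤ) 1 then 1 else 0) := by
  rw [card_filter, sum_Icc_potential k (fun u => if u = c then 1 else 0) (m := 1)
    (by push_cast; ring) (by norm_num), sum_ite_eq', sum_ite_eq']

def spectrumMultiplicity (v : ℤ) : ℕ :=
  if v = -k ∨ v = k + 1 then 1 else 4 * (min (v + k) (k + 1 - v)).toNat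

lemma count_spectrum (v : ℤ) :
    (spectrum [2 * k, 1, 1] [2 * k + 2]).count v = spectrumMultiplicity k v := by
  have hsum : [2 * k, 1, 1].sum = 2 * k + 2 := by simp
  rw [spectrum, hsum, spectrumBlock_eq, Multiset.count_sub, Multiset.count_add,
    count_map_sub_product]
  simp_rw [card_filter_potential_eq]
  rw [sum_Icc_potential k (fun u => (if v + u ∈ Icc (1 - k : ℤ) 0 then 1 else 0) +
    (if v + u ∈ Icc (-k : ℤ) 1 then 1 else 0)) (N := 2 * k) (m := -1) (by push_cast; ring)
    le_rfl]
  simp only [sum_add_distrib, sum_Icc_ite_add_mem_Icc, Multiset.insert_eq_cons,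
    Multiset.count_cons, Multiset.count_singleton, spectrumMultiplicity]
  split_ifs <;> omega

lemma count_replicate_sum (v : ℤ) :
    (Multiset.replicate 1 (-(k : ℤ)) + Multiset.replicate 1 ((k : ℤ) + 1) +
        ∑ i ∈ Icc 1 k, (Multiset.replicate (4 * i) ((i : ℤ) - k) +
          Multiset.replicate (4 * i) ((k : ℤ) - i + 1))).count v =
      spectrumMultiplicity k v := by
  have hleft : ∀ i : ℕ, (i : ℤ) - k = v ↔ (i : ℤ) = v + k := fun i => by omega
  have hright : ∀ i : ℕ, (k : ℤ) - i + 1 = v ↔ (i : ℤ) = k + 1 - v := fun i => by omega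
  simp only [Multiset.count_add, Multiset.count_replicate, Multiset.count_sum', sum_add_distrib,
    hleft, hright, sum_ite_natCast_eq, mem_Icc, spectrumMultiplicity]
  split_ifs <;> omega

-- The tent `1, 4, 8, …, 4k, 4k, …, 8, 4, 1` is concave except at its two ends, where `1`
-- stands in place of `0`.
lemma spectrumMultiplicity_neighbors (v : ℤ) (h1 : -k < v) (h2 : v < k + 1) :
    let p := spectrumMultiplicity k (v - 1)
    let q := spectrumMultiplicity k (v + 1)
    let m := spectrumMultiplicity k v
    (p = 1 ∧ q ≤ 8 ∧ m = 4) ∨ (q = 1 ∧ p ≤ 8 ∧ m = 4) ∨ p + q ≤ 2 * m := by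
  simp only [spectrumMultiplicity]
  split_ifs <;> omega

lemma spectrumMultiplicity_mul_le_sq (v : ℤ) (h1 : -k < v) (h2 : v < k + 1) :
    spectrumMultiplicity k (v - 1) * spectrumMultiplicity k (v + 1) ≤
      spectrumMultiplicity k v ^ 2 := by
  rcases spectrumMultiplicity_neighbors k v h1 h2 with ⟨hp, hq, hm⟩ | ⟨hq, hp, hm⟩ | hsum
  · rw [hp, hm]; omega
  · rw [hq, hm]; omega
  · zify at hsum ⊢
    nlinarith [sq_nonneg ((spectrumMultiplicity k (v - 1) : ℤ) - spectrumMultiplicity k (v + 1))]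

lemma toFinset_spectrum :
    (spectrum [2 * k, 1, 1] [2 * k + 2]).toFinset = Icc (-k : ℤ) (k + 1) := by
  ext v
  rw [Multiset.mem_toFinset, ← Multiset.count_pos, count_spectrum, spectrumMultiplicity, mem_Icc]
  split_ifs <;> omega

end Meander

end

theorem statement15_general (k : ℕ) :
    spectrum [2 * k, 1, 1] [2 * k + 2]
        = Multiset.replicate 1 (-(k : ℤ)) + Multiset.replicate 1 ((k : ℤ) + 1) +
          ∑ i ∈ Finset.Icc 1 k,
            (Multiset.replicate (4 * i) ((i : ℤ) - k) +
              Multiset.replicate (4 * i) ((k : ℤ) - i + 1)) ∧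
    HasLogConcaveSpectrum (spectrum [2 * k, 1, 1] [2 * k + 2]) := by
  refine ⟨Multiset.ext.2 fun v => by rw [count_spectrum, count_replicate_sum], ?_⟩
  refine hasLogConcaveSpectrum_of_toFinset_eq_Icc (toFinset_spectrum k) fun v h1 h2 => ?_
  simp only [count_spectrum]
  exact spectrumMultiplicity_mul_le_sq k v h1 h2

/-- For `k ≥ 1`, the spectrum of the Frobenius type-A seaweed `p^A(2k|1|1 / 2k+2)` is
`{-k, k+1} ∪ ⋃_{i=1}^{k} {(-k+i)^{4i}, (k-i+1)^{4i}}`, and the seaweed has the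
log-concave spectrum property. -/
theorem statement15 (k : ℕ) (hk : 1 ≤ k) :
    spectrum [2 * k, 1, 1] [2 * k + 2]
        = Multiset.replicate 1 (-(k : ℤ)) + Multiset.replicate 1 ((k : ℤ) + 1) +
          ∑ i ∈ Finset.Icc 1 k,
            (Multiset.replicate (4 * i) ((i : ℤ) - k) +
              Multiset.replicate (4 * i) ((k : ℤ) - i + 1)) ∧
    HasLogConcaveSpectrum (spectrum [2 * k, 1, 1] [2 * k + 2]) :=
  statement15_general k

end Seaweed
end
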